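/- arXiv:2401.10146 — 3 statements merged into one kernel-verified Lean document; each statement's English description precedes it below -/
import Mathlib

section
/- Let T be a triangulated category with a non-degenerate t-structure, and let a, N be integers with N > 0. Suppose given morphisms p : P → E and q : F → F' in T such that: (i) H^n(p) is an isomorphism for all n ≥ a - N and E lies in T^{≥ a}; (ii) H^n(q) is an isomorphism for all n ≥ a and F' lies in T^{≥ a - N}. If P is a retract of F (i.e., there are maps P → F → P composing to the identity), then E is a retract of F'. -/
/-!
Common preamble: generation in triangulated categories, truncation triangles for
t-structures, "isomorphism in degrees ≥ a", levels `⟨G⟩_n`, `coprod_n`,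
and Rouquier dimension.
-/

open CategoryTheory Limits Pretriangulated Triangulated

namespace RouquierApprox

variable {C : Type*} [Category C] [Preadditive C] [HasZeroObject C] [HasShift C ℤ]
  [∀ (n : ℤ), (shiftFunctor C n).Additive] [Pretriangulated C]

/-- A t-structure is non-degenerate if `⋂ₙ T^{≥n} = 0 = ⋂ₙ T^{≤-n}`. -/
def IsNonDegenerate (t : TStructure C) : Prop :=
  (∀ X : C, (∀ n : ℤ, t.ge n X) → IsZero X) ∧ (∀ X : C, (∀ n : ℤ, t.le n X) → IsZero X)

/-- A t-structure is bounded if every object is bounded. -/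
def IsBoundedTStructure (t : TStructure C) : Prop :=
  ∀ X : C, ∃ n : ℤ, 0 < n ∧ t.le n X ∧ t.ge (-n) X

/-- A choice of truncation triangle `τ_{≤ a-1} A ⟶ A ⟶ τ_{≥ a} A ⟶ (τ_{≤ a-1} A)[1]`. -/
structure TruncGETriangle (t : TStructure C) (a : ℤ) (A : C) where
  left : C
  right : C
  left_le : t.le (a - 1) left
  right_ge : t.ge a right
  ι : left ⟶ A
  π : A ⟶ right
  δ : right ⟶ left⟦(1 : ℤ)⟧
  dist : Triangle.mk ι π δ ∈ distTriang C

/-- `f : A ⟶ B` induces isomorphisms on the cohomology objects `H^n` (with respect to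
the t-structure `t`) for all `n ≥ a`; for a non-degenerate t-structure this is
equivalently expressed by saying that any morphism induced by `f` between the
truncations `τ_{≥ a} A ⟶ τ_{≥ a} B` is an isomorphism. -/
def IsIsoInDegreesGE (t : TStructure C) (a : ℤ) {A B : C} (f : A ⟶ B) : Prop :=
  ∀ (TA : TruncGETriangle t a A) (TB : TruncGETriangle t a B) (g : TA.right ⟶ TB.right),
    TA.π ≫ g = f ≫ TB.π → IsIso g

/-- `P` is a retract (direct summand) of `F`. -/
def IsRetract (P F : C) : Prop := ∃ (i : P ⟶ F) (r : F ⟶ P), i ≫ r = 𝟙 P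

/-- Finite coproducts of shifts of objects of `S`. -/
def finCoprodShifts (S : Set C) : Set C :=
  {X | ∃ (k : ℕ) (obj : Fin k → C) (s : Fin k → ℤ),
    (∀ i, obj i ∈ S) ∧ Nonempty (X ≅ ⨁ (fun i => (obj i)⟦s i⟧))}

/-- `add S`: retracts of finite coproducts of shifts of objects of `S`, i.e. the
closure of `S` under shifts, finite coproducts and retracts. -/
def addSet (S : Set C) : Set C := {X | ∃ F ∈ finCoprodShifts S, IsRetract X F}

/-- Cones of morphisms from an object of `S` to an object of `T`. -/
def coneSet (S T : Set C) : Set C :=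
  {Z | ∃ (A B : C) (f : A ⟶ B) (g : B ⟶ Z) (h : Z ⟶ A⟦(1 : ℤ)⟧),
    A ∈ S ∧ B ∈ T ∧ Triangle.mk f g h ∈ distTriang C}

/-- The level filtration `⟨G⟩_n`: `⟨G⟩_0` consists of zero objects, `⟨G⟩_1 = add G`,
and `⟨G⟩_n = add (cones of maps from ⟨G⟩_{n-1} to ⟨G⟩_1)`. -/
def levelSet (G : C) : ℕ → Set C
  | 0 => {X | IsZero X}
  | 1 => addSet {G}
  | (n+2) => addSet (coneSet (levelSet G (n+1)) (addSet {G}))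

/-- `coprod_n (G(-∞,∞))`: as `levelSet` but without retracts. -/
def coprodLevel (G : C) : ℕ → Set C
  | 0 => {X | IsZero X}
  | 1 => finCoprodShifts {G}
  | (n+2) => coneSet (coprodLevel G (n+1)) (finCoprodShifts {G})

/-- The level of `E` with respect to `G`: the minimal `n` with `E ∈ ⟨G⟩_n`. -/
noncomputable def levelOf (G E : C) : ℕ∞ :=
  sInf {n : ℕ∞ | ∃ k : ℕ, n = k ∧ E ∈ levelSet G k}

/-- The Rouquier dimension of a (strictly full triangulated) subcategory `S` of `C`,
with levels computed in the ambient category: the least `d` such that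
`S ⊆ ⟨G⟩_{d+1}` for some `G ∈ S`. -/
noncomputable def relRouquierDim (S : Set C) : ℕ∞ :=
  sInf {d : ℕ∞ | ∃ (k : ℕ) (G : C), G ∈ S ∧ d = k ∧ S ⊆ levelSet G (k + 1)}

/-- `G` is a strong generator of the (strictly full triangulated) subcategory `S`. -/
def IsStrongGeneratorOf (S : Set C) (G : C) : Prop :=
  G ∈ S ∧ ∃ n : ℕ, S ⊆ levelSet G n

/-- A morphism `ψ : K ⟶ L` is `G`-ghost if every composition `G⟦n⟧ ⟶ K ⟶ L` vanishes. -/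
def IsGhost (G : C) {K L : C} (ψ : K ⟶ L) : Prop :=
  ∀ (n : ℤ) (φ : G⟦n⟧ ⟶ K), φ ≫ ψ = 0

end RouquierApprox

open CategoryTheory Limits Pretriangulated Triangulated RouquierApprox

/-!
Put `n = a - N < a`. As `E` and `F'` are `≥ n`, the maps `p` and `i ≫ q` factor through
`P ⟶ τ_{≥n} P`, the first one through an isomorphism `τ_{≥n} P ≅ E`; this gives `E ⟶ F'`.
As `E` is `≥ a`, `r ≫ p` factors through `F ⟶ τ_{≥a} F ≅ τ_{≥a} F'`; this gives `F' ⟶ E`.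
A map `τ_{≥n} P ⟶ E` is determined by its restriction to `P`, and both the isomorphism and the
composite `τ_{≥n} P ⟶ F' ⟶ E` restrict to `i ≫ r ≫ p = p`.
-/

namespace RouquierApprox

variable {C : Type*} [Category C] [Preadditive C] [HasZeroObject C] [HasShift C ℤ]
  [∀ (n : ℤ), (shiftFunctor C n).Additive] [Pretriangulated C] {t : TStructure C} {a : ℤ}

namespace TruncGETriangle

variable (t a)

noncomputable def canonical (X : C) : TruncGETriangle t a X where
  left := (t.truncLT a).obj X
  right := (t.truncGE a).obj X
  left_le := t.le_of_isLE _ _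
  right_ge := t.ge_of_isGE _ _
  ι := (t.truncLTι a).app X
  π := (t.truncGEπ a).app X
  δ := (t.truncGEδLT a).app X
  dist := t.triangleLTGE_distinguished a X

open ZeroObject in
noncomputable def ofIsGE (X : C) [t.IsGE X a] : TruncGETriangle t a X where
  left := 0
  right := X
  left_le := t.le_of_isLE _ _
  right_ge := t.ge_of_isGE _ _
  ι := 0
  π := 𝟙 X
  δ := 0
  dist := contractible_distinguished₁ X

end TruncGETriangle

namespace IsIsoInDegreesGE

variable {A B : C} {f : A ⟶ B}

lemma isIso_truncGE_map (hf : IsIsoInDegreesGE t a f) : IsIso ((t.truncGE a).map f) :=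
  hf (.canonical t a A) (.canonical t a B) _ (t.truncGEπ_naturality a f)

lemma isIso_descTruncGE (hf : IsIsoInDegreesGE t a f) [t.IsGE B a] :
    IsIso (t.descTruncGE f a) :=
  hf (.canonical t a A) (.ofIsGE t a B) _ (by simp [TruncGETriangle.canonical,
    TruncGETriangle.ofIsGE])

end IsIsoInDegreesGE

end RouquierApprox

theorem statement1_general {C : Type*} [Category C] [Preadditive C] [HasZeroObject C] [HasShift C ℤ]
    [∀ (n : ℤ), (shiftFunctor C n).Additive] [Pretriangulated C]
    (t : TStructure C) (a N : ℤ) (hN : 0 < N)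
    {P E F F' : C} (p : P ⟶ E) (q : F ⟶ F')
    (hp : IsIsoInDegreesGE t (a - N) p) (hE : t.ge a E)
    (hq : IsIsoInDegreesGE t a q) (hF' : t.ge (a - N) F')
    (hPF : IsRetract P F) :
    IsRetract E F' := by
  obtain ⟨i, r, hir⟩ := hPF
  have : t.IsGE E a := ⟨hE⟩
  have : t.IsGE E (a - N) := t.isGE_of_ge E (a - N) a
  have : t.IsGE F' (a - N) := ⟨hF'⟩
  have := hp.isIso_descTruncGE
  have := hq.isIso_truncGE_map
  refine ⟨inv (t.descTruncGE p (a - N)) ≫ t.descTruncGE (i ≫ q) (a - N),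
    (t.truncGEπ a).app F' ≫ inv ((t.truncGE a).map q) ≫ t.descTruncGE (r ≫ p) a, ?_⟩
  rw [Category.assoc, IsIso.inv_comp_eq, Category.comp_id]
  refine t.from_truncGE_obj_ext ?_
  rw [t.π_descTruncGE_assoc (i ≫ q), t.π_descTruncGE p, Category.assoc,
    ← t.truncGEπ_naturality_assoc a q, IsIso.hom_inv_id_assoc, t.π_descTruncGE, reassoc_of% hir]

/-- Lemma 3.2. Let `T` be a triangulated category with a
non-degenerate t-structure and `a, N` integers, `N > 0`. Given `p : P ⟶ E` an
isomorphism in degrees `≥ a - N` with `E ∈ T^{≥ a}`, and `q : F ⟶ F'` an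
isomorphism in degrees `≥ a` with `F' ∈ T^{≥ a - N}`: if `P` is a retract of `F`,
then `E` is a retract of `F'`. -/
theorem statement1 {C : Type*} [Category C] [Preadditive C] [HasZeroObject C] [HasShift C ℤ]
    [∀ (n : ℤ), (shiftFunctor C n).Additive] [Pretriangulated C]
    (t : TStructure C) (hnd : IsNonDegenerate t) (a N : ℤ) (hN : 0 < N)
    {P E F F' : C} (p : P ⟶ E) (q : F ⟶ F')
    (hp : IsIsoInDegreesGE t (a - N) p) (hE : t.ge a E)
    (hq : IsIsoInDegreesGE t a q) (hF' : t.ge (a - N) F')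
    (hPF : IsRetract P F) :
    IsRetract E F' :=
  statement1_general t a N hN p q hp hE hq hF' hPF
end

section
/- Let T be a triangulated category with a bounded t-structure and let G be an object of T with amplitude w (i.e., H^n(G) = 0 outside an interval of length w). Then any object F of coprod_1(G(-∞,∞)) (a finite coproduct of shifts of G) decomposes for each integer a as F ≅ F' ⊕ F'' with F'' ∈ T^{< a}, F' ∈ T^{≥ a - w}, and both F', F'' again finite coproducts of shifts of G; in particular the projection F → F' is an isomorphism on H^n for all n ≥ a. -/
/-!
Common preamble: generation in triangulated categories, truncation triangles for
t-structures, "isomorphism in degrees ≥ a", levels `⟨G⟩_n`, `coprod_n`,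
and Rouquier dimension.
-/

open CategoryTheory Limits Pretriangulated Triangulated

open CategoryTheory Limits Pretriangulated Triangulated RouquierApprox

/-!
A shift `G⟦s⟧` lies in `T^{≥ i - s} ∩ T^{≤ i + w - s}`, so the summands of
`F = ⨁ G⟦sⱼ⟧` split into those with `i + w - sⱼ < a`, whose sum `F''` lies in `T^{< a}`, and
the others, whose sum `F'` lies in `T^{≥ a - w}`. Since `F''` has no maps to `T^{≥ a}`,
precomposition with the projection `F ⟶ F'` is bijective on morphisms into `T^{≥ a}`; so is
precomposition with `π : A ⟶ τ_{≥ a} A`, and by Yoneda a map between objects of `T^{≥ a}` with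
this property is an isomorphism.
-/

namespace CategoryTheory

namespace Limits

variable {C : Type*} [Category C] [Preadditive C] [HasFiniteBiproducts C] {J : Type*}
  [Finite J] (f : J → C)

lemma biproduct.fromSubtype_toSubtype_eq_zero {p q : J → Prop} (h : ∀ j, p j → ¬ q j) :
    biproduct.fromSubtype f p ≫ biproduct.toSubtype f q = 0 := by
  ext i j
  simp only [Category.assoc, biproduct.toSubtype_π, zero_comp, comp_zero]
  erw [biproduct.ι_fromSubtype_assoc]
  exact biproduct.ι_π_ne f fun hji : j.1 = i.1 => h _ j.2 (hji ▸ i.2)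

noncomputable def biproduct.isoBiprodSubtype [HasBinaryBiproducts C] (p : J → Prop)
    [DecidablePred p] :
    ⨁ f ≅ (⨁ Subtype.restrict p f) ⊞ (⨁ Subtype.restrict pᶜ f) where
  hom := biprod.lift (biproduct.toSubtype f p) (biproduct.toSubtype f pᶜ)
  inv := biprod.desc (biproduct.fromSubtype f p) (biproduct.fromSubtype f pᶜ)
  hom_inv_id := by
    classical
    rw [biprod.lift_desc, biproduct.toSubtype_fromSubtype, biproduct.toSubtype_fromSubtype]
    ext j
    by_cases hj : p j <;> simp [hj]
  inv_hom_id := by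
    apply biprod.hom_ext' <;> apply biprod.hom_ext <;>
      simp [biproduct.fromSubtype_toSubtype_eq_zero f (p := p) (q := pᶜ) fun _ hp hq => hq hp,
        biproduct.fromSubtype_toSubtype_eq_zero f (p := pᶜ) (q := p) fun _ hq hp => hq hp]

end Limits

namespace ObjectProperty

lemma isLocal_biprod_fst {C : Type*} [Category C] [Preadditive C] (P : ObjectProperty C)
    {X Y : C} [HasBinaryBiproduct X Y] (hY : ∀ Z, P Z → ∀ u : Y ⟶ Z, u = 0) :
    P.isLocal (biprod.fst : X ⊞ Y ⟶ X) := by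
  intro Z hZ
  refine ⟨fun u v huv => by simpa using congrArg (biprod.inl ≫ ·) huv, fun h => ?_⟩
  refine ⟨biprod.inl ≫ h, biprod.hom_ext' _ _ (by simp) ?_⟩
  simpa using (hY Z hZ (biprod.inr ≫ h)).symm

end ObjectProperty

namespace Triangulated.TStructure

variable {C : Type*} [Category C] [Preadditive C] [HasZeroObject C] [HasShift C ℤ]
  [∀ (n : ℤ), (shiftFunctor C n).Additive] [Pretriangulated C] (t : TStructure C)

lemma isLE_biproduct {J : Type*} (f : J → C) [HasBiproduct f] (n : ℤ)
    (h : ∀ j, t.IsLE (f j) n) :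
    t.IsLE (⨁ f) n := by
  rw [t.isLE_iff_orthogonal n (n + 1) rfl]
  intro Y g _
  exact biproduct.hom_ext' _ _ fun j => by simpa using t.zero (biproduct.ι f j ≫ g) n (n + 1)

lemma isGE_biproduct {J : Type*} (f : J → C) [HasBiproduct f] (n : ℤ)
    (h : ∀ j, t.IsGE (f j) n) :
    t.IsGE (⨁ f) n := by
  rw [t.isGE_iff_orthogonal (n - 1) n (by lia)]
  intro Y g _
  exact biproduct.hom_ext _ _ fun j => by simpa using t.zero (g ≫ biproduct.π f j) (n - 1) n

end Triangulated.TStructure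

end CategoryTheory

namespace RouquierApprox

variable {C : Type*} [Category C] [Preadditive C] [HasZeroObject C] [HasShift C ℤ]
  [∀ (n : ℤ), (shiftFunctor C n).Additive] [Pretriangulated C]

lemma biproduct_mem_finCoprodShifts {S : Set C} {J : Type*} [Finite J] (obj : J → C)
    (s : J → ℤ) (hobj : ∀ j, obj j ∈ S) : (⨁ fun j => (obj j)⟦s j⟧) ∈ finCoprodShifts S := by
  obtain ⟨k, ⟨e⟩⟩ := Finite.exists_equiv_fin J
  exact ⟨k, obj ∘ e.symm, s ∘ e.symm, fun i => hobj _,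
    ⟨biproduct.whiskerEquiv e fun j => eqToIso (by simp)⟩⟩

variable {t : TStructure C} {a : ℤ}

lemma TruncGETriangle.isLocal_π {A : C} (T : TruncGETriangle t a A) : (t.ge a).isLocal T.π := by
  intro X hX
  rw [t.ge_iff_isGE] at hX
  have hL := (t.le_iff_isLE _ _).1 T.left_le
  refine ⟨fun u v huv => sub_eq_zero.1 ?_, fun h => ?_⟩
  · obtain ⟨g, hg⟩ := Triangle.yoneda_exact₃ _ T.dist (u - v)
      (show T.π ≫ (u - v) = 0 by rw [Preadditive.comp_sub, sub_eq_zero]; exact huv)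
    have hg0 := t.zero_of_isLE_of_isGE g (a - 2) a (by lia)
      (t.isLE_shift T.left (a - 1) 1 (a - 2)) hX
    rw [hg, hg0]
    exact comp_zero
  · obtain ⟨g, hg⟩ := Triangle.yoneda_exact₂ _ T.dist h
      (t.zero_of_isLE_of_isGE _ (a - 1) a (by lia) hL hX)
    exact ⟨g, hg.symm⟩

lemma isIsoInDegreesGE_of_isLocal {A B : C} {f : A ⟶ B} (hf : (t.ge a).isLocal f) :
    IsIsoInDegreesGE t a f := by
  intro TA TB g hg
  have hπg : (t.ge a).isLocal (TA.π ≫ g) := hg ▸ (t.ge a).isLocal.comp_mem _ _ hf TB.isLocal_π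
  exact ((t.ge a).isLocal_iff_isIso g TA.right_ge TB.right_ge).1
    ((t.ge a).isLocal.of_precomp _ _ TA.isLocal_π hπg)

end RouquierApprox

theorem statement2_general {C : Type*} [Category C] [Preadditive C] [HasZeroObject C] [HasShift C ℤ]
    [∀ (n : ℤ), (shiftFunctor C n).Additive] [Pretriangulated C]
    (t : TStructure C)
    (G : C) (w : ℕ) (hG : ∃ i : ℤ, t.ge i G ∧ t.le (i + w) G)
    (F : C) (hF : F ∈ coprodLevel G 1) (a : ℤ) :
    ∃ (F' F'' : C) (e : F ≅ F' ⊞ F''),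
      t.le (a - 1) F'' ∧ t.ge (a - w) F' ∧
      F' ∈ coprodLevel G 1 ∧ F'' ∈ coprodLevel G 1 ∧
      IsIsoInDegreesGE t a (e.hom ≫ biprod.fst) := by
  obtain ⟨i, hGge, hGle⟩ := hG
  rw [t.ge_iff_isGE] at hGge
  rw [t.le_iff_isLE] at hGle
  obtain ⟨k, obj, s, hobj, ⟨eF⟩⟩ := hF
  obtain rfl : obj = fun _ => G := funext hobj
  let p : Fin k → Prop := fun j => s j ≤ i + w - a
  have hsummand_ge : ∀ j : Subtype p, t.IsGE (G⟦s j⟧) (a - w) := fun j =>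
    have := t.isGE_shift G i (s j) (i - s j)
    t.isGE_of_ge _ (a - w) (i - s j) (by have : s j ≤ i + w - a := j.2; lia)
  have hsummand_le : ∀ j : Subtype pᶜ, t.IsLE (G⟦s j⟧) (a - 1) := fun j =>
    have := t.isLE_shift G (i + w) (s j) (i + w - s j)
    t.isLE_of_le _ (i + w - s j) (a - 1) (by have : ¬ s j ≤ i + w - a := j.2; lia)
  have hF''le := t.isLE_biproduct _ _ hsummand_le
  refine ⟨_, _, eF ≪≫ biproduct.isoBiprodSubtype (fun j => G⟦s j⟧) p,
    (t.le_iff_isLE _ _).2 hF''le, (t.ge_iff_isGE _ _).2 (t.isGE_biproduct _ _ hsummand_ge),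
    biproduct_mem_finCoprodShifts (fun _ => G) _ fun _ => rfl,
    biproduct_mem_finCoprodShifts (fun _ => G) _ fun _ => rfl, ?_⟩
  refine isIsoInDegreesGE_of_isLocal <| (t.ge a).isLocal.comp_mem _ _
    (ObjectProperty.isLocal_of_isIso _ _) ((t.ge a).isLocal_biprod_fst fun Z hZ u => ?_)
  rw [t.ge_iff_isGE] at hZ
  exact t.zero_of_isLE_of_isGE u (a - 1) a (by lia) hF''le hZ

/-- base case of Lemma 3.4. Let `T` be a triangulated category with
a bounded t-structure and `G` an object of amplitude `w` (i.e. the `H^n(G)` vanish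
outside an interval of length `w`, equivalently `G ∈ T^{≥ i} ∩ T^{≤ i + w}` for some
`i`). Then any finite coproduct of shifts of `G` decomposes, for every integer `a`,
as `F ≅ F' ⊞ F''` with `F'' ∈ T^{< a}`, `F' ∈ T^{≥ a - w}`, both again finite
coproducts of shifts of `G`, and the projection `F ⟶ F'` an isomorphism on `H^n`
for all `n ≥ a`. -/
theorem statement2 {C : Type*} [Category C] [Preadditive C] [HasZeroObject C] [HasShift C ℤ]
    [∀ (n : ℤ), (shiftFunctor C n).Additive] [Pretriangulated C]
    (t : TStructure C) (hb : IsBoundedTStructure t)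
    (G : C) (w : ℕ) (hG : ∃ i : ℤ, t.ge i G ∧ t.le (i + w) G)
    (F : C) (hF : F ∈ coprodLevel G 1) (a : ℤ) :
    ∃ (F' F'' : C) (e : F ≅ F' ⊞ F''),
      t.le (a - 1) F'' ∧ t.ge (a - w) F' ∧
      F' ∈ coprodLevel G 1 ∧ F'' ∈ coprodLevel G 1 ∧
      IsIsoInDegreesGE t a (e.hom ≫ biprod.fst) :=
  statement2_general t G w hG F hF a
end

section
/- Let T be a triangulated category with a bounded t-structure, G an object of T, and d a positive integer. Then there exists an integer N > 0 such that: if E ∈ T^{≥ a} for some integer a, P → E is a morphism inducing isomorphisms on H^n for all n ≥ a - N, and P lies in ⟨G⟩_d, then E lies in ⟨G⟩_d. -/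
/-!
Common preamble: generation in triangulated categories, truncation triangles for
t-structures, "isomorphism in degrees ≥ a", levels `⟨G⟩_n`, `coprod_n`,
and Rouquier dimension.
-/

open CategoryTheory Limits Pretriangulated Triangulated

open CategoryTheory Limits Pretriangulated Triangulated RouquierApprox


/-!
Let `G ∈ T^{≥ p} ∩ T^{≤ q}`. Call `β : F ⟶ F₂` an approximation in degrees `≥ m` if precomposition
with `β` is bijective on morphisms into `T^{≥ m}`. By induction on `d`, every `P ∈ ⟨G⟩_d` is a
retract of some `F` which, for every `b`, has an approximation `F ⟶ F₂` in degrees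
`≥ b + (q - p + 1) d - 1` with `F₂ ∈ ⟨G⟩_d ∩ T^{≥ b}`. For `G` itself take `𝟙 G` when `G ∈ T^{≥ b}`
and `G ⟶ 0` otherwise, as then `G` has no maps to `T^{≥ b + q - p}`; shifts, finite sums and
retracts are harmless; for a cone of `A ⟶ B`, approximate `A` and `B`, lift the map between the
approximations, and conclude by the five lemma for the cohomological functors `Hom(-, Y)`.

In the theorem take `b = a - N` with `N` so large that `m ≤ a`. Then `E ≅ τ_{≥ b} P` lies in
`T^{≥ m}`, the approximation `F ⟶ F₂` splits on this truncation, and `E` is a retract of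
`F₂ ∈ ⟨G⟩_d`.
-/

namespace RouquierApprox

open ZeroObject

variable {C : Type*} [Category C]

lemma IsRetract.trans {X Y Z : C} (h₁ : IsRetract X Y) (h₂ : IsRetract Y Z) : IsRetract X Z := by
  obtain ⟨i₁, r₁, h₁⟩ := h₁
  obtain ⟨i₂, r₂, h₂⟩ := h₂
  exact ⟨i₁ ≫ i₂, r₂ ≫ r₁, by simp [reassoc_of% h₂, h₁]⟩

lemma IsRetract.of_iso {X Y : C} (e : X ≅ Y) : IsRetract X Y := ⟨e.hom, e.inv, e.hom_inv_id⟩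

lemma IsRetract.shift [HasShift C ℤ] {X Y : C} (h : IsRetract X Y) (σ : ℤ) :
    IsRetract (X⟦σ⟧) (Y⟦σ⟧) := by
  obtain ⟨i, r, h⟩ := h
  exact ⟨i⟦σ⟧', r⟦σ⟧', by simp [← Functor.map_comp, h]⟩

variable [Preadditive C]

lemma IsRetract.isZero {X Y : C} (h : IsRetract X Y) (hY : IsZero Y) : IsZero X := by
  obtain ⟨i, r, h⟩ := h
  rw [IsZero.iff_id_eq_zero, ← h, hY.eq_of_src r 0, comp_zero]

lemma IsRetract.biproduct [HasFiniteBiproducts C] {J : Type} [Finite J] {X Y : J → C}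
    (h : ∀ j, IsRetract (X j) (Y j)) : IsRetract (⨁ X) (⨁ Y) := by
  choose i r h using h
  exact ⟨biproduct.map i, biproduct.map r, by ext; simp [h]⟩

variable [HasZeroObject C] [HasShift C ℤ] [∀ (n : ℤ), (shiftFunctor C n).Additive]
  [Pretriangulated C]

lemma isRetract_obj₃ {T T' : Triangle C} (hT : T ∈ distTriang C) (hT' : T' ∈ distTriang C)
    {i₁ : T.obj₁ ⟶ T'.obj₁} {r₁ : T'.obj₁ ⟶ T.obj₁} (h₁ : i₁ ≫ r₁ = 𝟙 _)
    {i₂ : T.obj₂ ⟶ T'.obj₂} {r₂ : T'.obj₂ ⟶ T.obj₂} (h₂ : i₂ ≫ r₂ = 𝟙 _)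
    (hi : T.mor₁ ≫ i₂ = i₁ ≫ T'.mor₁) (hr : T'.mor₁ ≫ r₂ = r₁ ≫ T.mor₁) :
    IsRetract T.obj₃ T'.obj₃ := by
  obtain ⟨i₃, hi₂, hi₃⟩ := complete_distinguished_triangle_morphism T T' hT hT' i₁ i₂ hi
  obtain ⟨r₃, hr₂, hr₃⟩ := complete_distinguished_triangle_morphism T' T hT' hT r₁ r₂ hr
  let e : T ⟶ T := Triangle.homMk _ _ (𝟙 _) (𝟙 _) (i₃ ≫ r₃) (by simp)
    (by simp [reassoc_of% hi₂, hr₂, reassoc_of% h₂])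
    (by simp [← hr₃, ← reassoc_of% hi₃, ← Functor.map_comp, h₁])
  have : IsIso (i₃ ≫ r₃) :=
    isIso₃_of_isIso₁₂ e hT hT (inferInstanceAs (IsIso (𝟙 _))) (inferInstanceAs (IsIso (𝟙 _)))
  exact ⟨i₃, r₃ ≫ inv (i₃ ≫ r₃), by rw [← Category.assoc, IsIso.hom_inv_id]⟩

lemma mem_finCoprodShifts {S : Set C} {J : Type} [Fintype J] {X : J → C} (hX : ∀ j, X j ∈ S)
    (σ : J → ℤ) {Y : C} (e : Y ≅ ⨁ fun j => (X j)⟦σ j⟧) : Y ∈ finCoprodShifts S :=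
  let ε := (Fintype.equivFin J).symm
  ⟨Fintype.card J, X ∘ ε, σ ∘ ε, fun _ => hX _,
    ⟨e ≪≫ (biproduct.whiskerEquiv ε fun _ => Iso.refl _).symm⟩⟩

lemma finCoprodShifts_shift {S : Set C} {X : C} (hX : X ∈ finCoprodShifts S) (σ : ℤ) :
    X⟦σ⟧ ∈ finCoprodShifts S := by
  obtain ⟨k, Y, τ, hY, ⟨e⟩⟩ := hX
  exact mem_finCoprodShifts hY (fun i => τ i + σ) ((shiftFunctor C σ).mapIso e ≪≫
    (shiftFunctor C σ).mapBiproduct _ ≪≫ biproduct.whiskerEquiv (Equiv.refl _)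
      fun i => (shiftFunctorAdd' C (τ i) σ (τ i + σ) rfl).app (Y i))

lemma addSet_of_isRetract {S : Set C} {X Y : C} (h : IsRetract X Y) (hY : Y ∈ addSet S) :
    X ∈ addSet S := by
  obtain ⟨F, hF, hYF⟩ := hY
  exact ⟨F, hF, h.trans hYF⟩

lemma mem_addSet_self {S : Set C} {X : C} (hX : X ∈ S) : X ∈ addSet S :=
  ⟨X, mem_finCoprodShifts (fun _ : Unit => hX) (fun _ => 0)
    (((shiftFunctorZero C ℤ).app X).symm ≪≫
      (biproductUniqueIso fun _ : Unit => X⟦(0 : ℤ)⟧).symm),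
    IsRetract.of_iso (Iso.refl X)⟩

lemma zero_mem_addSet (S : Set C) {X : C} (hX : IsZero X) : X ∈ addSet S :=
  ⟨⨁ fun i : Fin 0 => (i.elim0 : C)⟦(0 : ℤ)⟧,
    ⟨0, fun i => i.elim0, fun _ => 0, fun i => i.elim0, ⟨Iso.refl _⟩⟩, 0, 0, hX.eq_of_src _ _⟩

lemma addSet_shift {S : Set C} {X : C} (hX : X ∈ addSet S) (σ : ℤ) : X⟦σ⟧ ∈ addSet S := by
  obtain ⟨F, hF, hXF⟩ := hX
  exact ⟨F⟦σ⟧, finCoprodShifts_shift hF σ, hXF.shift σ⟩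

lemma addSet_biproduct {S : Set C} {J : Type} [Fintype J] {X : J → C} (h : ∀ j, X j ∈ addSet S) :
    (⨁ X) ∈ addSet S := by
  choose F hF hXF using h
  choose k Y σ hY e using hF
  refine addSet_of_isRetract (IsRetract.biproduct hXF) ⟨_, ?_, IsRetract.of_iso (Iso.refl _)⟩
  exact mem_finCoprodShifts (J := Σ j, Fin (k j)) (fun p => hY p.1 p.2) (fun p => σ p.1 p.2)
    (biproduct.whiskerEquiv (Equiv.refl J) (fun j => (e j).some.symm) ≪≫
      biproductBiproductIso _ (fun j i => (Y j i)⟦σ j i⟧))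

lemma levelSet_of_isRetract {G X Y : C} {d : ℕ} (h : IsRetract X Y) (hY : Y ∈ levelSet G d) :
    X ∈ levelSet G d :=
  match d with
  | 0 => h.isZero hY
  | 1 => addSet_of_isRetract h hY
  | _ + 2 => addSet_of_isRetract h hY

variable (t : TStructure C)

lemma ge_biproduct {J : Type} [Finite J] {X : J → C} {m : ℤ} (h : ∀ j, t.ge m (X j)) :
    t.ge m (⨁ X) := by
  refine ((t.isGE_iff_orthogonal (m - 1) m (by lia) _).2 fun Y f hY => ?_).ge
  ext j
  simpa using t.zero_of_isLE_of_isGE (f ≫ biproduct.π X j) (m - 1) m (by lia) hY ⟨h j⟩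

/-- In other words, `τ_{≥ m} f` is an isomorphism. -/
structure IsHomEquivGE (m : ℤ) {A B : C} (f : A ⟶ B) : Prop where
  eq_zero_of_comp_eq_zero : ∀ Y, t.ge m Y → ∀ u : B ⟶ Y, f ≫ u = 0 → u = 0
  exists_comp_eq : ∀ Y, t.ge m Y → ∀ q : A ⟶ Y, ∃ v : B ⟶ Y, f ≫ v = q

namespace IsHomEquivGE

variable {t}

lemma mono {m m' : ℤ} (h : m ≤ m') {A B : C} {f : A ⟶ B} (hf : IsHomEquivGE t m f) :
    IsHomEquivGE t m' f :=
  ⟨fun Y hY => hf.1 Y (t.ge_antitone h Y hY), fun Y hY => hf.2 Y (t.ge_antitone h Y hY)⟩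

protected lemma id {m : ℤ} {A : C} : IsHomEquivGE t m (𝟙 A) :=
  ⟨fun _ _ _ hu => by simpa using hu, fun _ _ q => ⟨q, by simp⟩⟩

lemma of_isZero {q m : ℤ} {A B : C} (hA : t.le q A) (hB : IsZero B) (h : q < m) (f : A ⟶ B) :
    IsHomEquivGE t m f :=
  ⟨fun _ _ u _ => hB.eq_of_src u 0,
    fun _ hY g => ⟨0, by rw [comp_zero, t.zero_of_isLE_of_isGE g q m h ⟨hA⟩ ⟨hY⟩]⟩⟩

lemma shift {m σ : ℤ} {A B : C} {f : A ⟶ B} (hf : IsHomEquivGE t (m + σ) f) :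
    IsHomEquivGE t m (f⟦σ⟧') := by
  let adj : shiftFunctor C σ ⊣ shiftFunctor C (-σ) := (shiftEquiv C σ).toAdjunction
  have hY : ∀ Y, t.ge m Y → t.ge (m + σ) (Y⟦-σ⟧) := fun Y => t.ge_shift m (-σ) (m + σ) (by lia) Y
  refine ⟨fun Y hYm u hu => ?_, fun Y hYm q => ?_⟩
  · have h : f ≫ adj.homEquiv B Y u = 0 := by
      rw [← adj.homEquiv_naturality_left, hu]
      simp [Adjunction.homEquiv_unit]
    simpa [Adjunction.homEquiv_counit] using
      congrArg (adj.homEquiv B Y).symm (hf.eq_zero_of_comp_eq_zero _ (hY Y hYm) _ h)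
  · obtain ⟨v, hv⟩ := hf.exists_comp_eq _ (hY Y hYm) (adj.homEquiv A Y q)
    exact ⟨(adj.homEquiv B Y).symm v, by
      rw [← adj.homEquiv_naturality_left_symm, hv, Equiv.symm_apply_apply]⟩

lemma biproduct {m : ℤ} {J : Type} [Finite J] {A B : J → C} {f : ∀ j, A j ⟶ B j}
    (hf : ∀ j, IsHomEquivGE t m (f j)) : IsHomEquivGE t m (biproduct.map f) := by
  refine ⟨fun Y hY u hu => ?_, fun Y hY q => ?_⟩
  · ext j
    simpa using (hf j).eq_zero_of_comp_eq_zero Y hY (biproduct.ι B j ≫ u)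
      (by simpa using biproduct.ι A j ≫= hu)
  · choose v hv using fun j => (hf j).exists_comp_eq Y hY (biproduct.ι A j ≫ q)
    exact ⟨biproduct.desc v, by ext j; simpa using hv j⟩

/-- The five lemma for the cohomological functors `Hom(-, Y)`, `Y ∈ T^{≥ m}`. -/
lemma hom₃ {T₁ T₂ : Triangle C} (φ : T₁ ⟶ T₂) (hT₁ : T₁ ∈ distTriang C)
    (hT₂ : T₂ ∈ distTriang C) {m : ℤ} (h₁ : IsHomEquivGE t m φ.hom₁)
    (h₂ : IsHomEquivGE t m φ.hom₂) : IsHomEquivGE t m φ.hom₃ := by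
  have h₁' : IsHomEquivGE t m (φ.hom₁⟦(1 : ℤ)⟧') := (h₁.mono (by lia : m ≤ m + 1)).shift
  have h₂' : IsHomEquivGE t m (φ.hom₂⟦(1 : ℤ)⟧') := (h₂.mono (by lia : m ≤ m + 1)).shift
  have comm₁' : T₁.mor₁⟦(1 : ℤ)⟧' ≫ φ.hom₂⟦(1 : ℤ)⟧' = φ.hom₁⟦(1 : ℤ)⟧' ≫ T₂.mor₁⟦(1 : ℤ)⟧' := by
    simp only [← Functor.map_comp, φ.comm₁]
  refine ⟨fun Y hY u hu => ?_, fun Y hY q => ?_⟩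
  · obtain ⟨s, rfl⟩ := Triangle.yoneda_exact₃ _ hT₂ u
      (h₂.eq_zero_of_comp_eq_zero Y hY _ (by rw [← reassoc_of% φ.comm₂, hu, comp_zero]))
    obtain ⟨w, hw⟩ : ∃ w, φ.hom₁⟦(1 : ℤ)⟧' ≫ s = -T₁.mor₁⟦(1 : ℤ)⟧' ≫ w := by
      obtain ⟨w, hw⟩ := Triangle.yoneda_exact₃ _ (rot_of_distTriang _ hT₁) (φ.hom₁⟦1⟧' ≫ s)
        ((φ.comm₃_assoc s).trans hu)
      exact ⟨w, hw.trans (Preadditive.neg_comp _ _)⟩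
    obtain ⟨w₂, rfl⟩ := h₂'.exists_comp_eq Y hY w
    have hs : s + T₂.mor₁⟦(1 : ℤ)⟧' ≫ w₂ = 0 :=
      h₁'.eq_zero_of_comp_eq_zero Y hY _ (by
        rw [Preadditive.comp_add, hw, ← reassoc_of% comm₁', neg_add_cancel])
    simp [eq_neg_of_add_eq_zero_left hs, comp_distTriang_mor_zero₃₁_assoc _ hT₂]
  · obtain ⟨w, hw⟩ := h₂.exists_comp_eq Y hY (T₁.mor₂ ≫ q)
    obtain ⟨v, rfl⟩ := Triangle.yoneda_exact₂ _ hT₂ w (h₁.eq_zero_of_comp_eq_zero Y hY _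
      (by rw [← reassoc_of% φ.comm₁, hw, comp_distTriang_mor_zero₁₂_assoc _ hT₁, zero_comp]))
    obtain ⟨s, hs⟩ := Triangle.yoneda_exact₃ _ hT₁ (q - φ.hom₃ ≫ v)
      (by rw [Preadditive.comp_sub, reassoc_of% φ.comm₂, hw, sub_self])
    obtain ⟨s₂, rfl⟩ := h₁'.exists_comp_eq Y hY s
    refine ⟨v + T₂.mor₃ ≫ s₂, ?_⟩
    rw [Preadditive.comp_add, ← reassoc_of% φ.comm₃, ← hs, add_sub_cancel]

end IsHomEquivGE

def IsApproximable (S : Set C) (b m : ℤ) (P : C) : Prop :=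
  ∃ (F F₂ : C) (β : F ⟶ F₂), IsRetract P F ∧ F₂ ∈ S ∧ t.ge b F₂ ∧ IsHomEquivGE t m β

namespace IsApproximable

variable {t}

lemma of_isRetract {S : Set C} {b m : ℤ} {P Q : C} (h : IsRetract P Q)
    (hQ : IsApproximable t S b m Q) : IsApproximable t S b m P := by
  obtain ⟨F, F₂, β, hQF, hβ⟩ := hQ
  exact ⟨F, F₂, β, h.trans hQF, hβ⟩

lemma of_subset {S S' : Set C} (h : S ⊆ S') {b m : ℤ} {P : C} (hP : IsApproximable t S b m P) :
    IsApproximable t S' b m P := by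
  obtain ⟨F, F₂, β, hPF, hF₂, hβ⟩ := hP
  exact ⟨F, F₂, β, hPF, h hF₂, hβ⟩

lemma shift {T : Set C} {b m σ : ℤ} {P : C} (hP : IsApproximable t (addSet T) (b + σ) (m + σ) P) :
    IsApproximable t (addSet T) b m (P⟦σ⟧) := by
  obtain ⟨F, F₂, β, hPF, hF₂, hge, hβ⟩ := hP
  exact ⟨F⟦σ⟧, F₂⟦σ⟧, β⟦σ⟧', hPF.shift σ, addSet_shift hF₂ σ,
    t.ge_shift (b + σ) σ b (by lia) F₂ hge, hβ.shift⟩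

lemma biproduct {T : Set C} {b m : ℤ} {J : Type} [Fintype J] {P : J → C}
    (hP : ∀ j, IsApproximable t (addSet T) b m (P j)) :
    IsApproximable t (addSet T) b m (⨁ P) := by
  choose F F₂ β hPF hF₂ hge hβ using hP
  exact ⟨⨁ F, ⨁ F₂, biproduct.map β, IsRetract.biproduct hPF, addSet_biproduct hF₂,
    ge_biproduct t hge, IsHomEquivGE.biproduct hβ⟩

lemma of_mem_addSet {T T' : Set C} {o : ℤ}
    (h : ∀ X ∈ T, ∀ b, IsApproximable t (addSet T') b (b + o) X) {P : C} (hP : P ∈ addSet T)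
    (b : ℤ) : IsApproximable t (addSet T') b (b + o) P := by
  obtain ⟨F, ⟨k, X, σ, hX, ⟨e⟩⟩, hPF⟩ := hP
  refine (biproduct fun i => shift ?_).of_isRetract (hPF.trans (.of_iso e))
  rw [add_right_comm]
  exact h (X i) (hX i) (b + σ i)

lemma cone {S₁ S₂ : Set C} {A B Z : C} {f : A ⟶ B} {g : B ⟶ Z} {h : Z ⟶ A⟦(1 : ℤ)⟧}
    (hT : Triangle.mk f g h ∈ distTriang C) {b m m' : ℤ}
    (hA : IsApproximable t S₁ (b + 1) m A) (hB : IsApproximable t S₂ m m' B)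
    (hbm : b ≤ m) (hmm' : m ≤ m') : IsApproximable t (coneSet S₁ S₂) b m' Z := by
  obtain ⟨A', A₂, α, ⟨iA, rA, hirA⟩, hA₂, hA₂ge, hα⟩ := hA
  obtain ⟨B', B₂, β, ⟨iB, rB, hirB⟩, hB₂, hB₂ge, hβ⟩ := hB
  obtain ⟨Z', g', h', hT'⟩ := distinguished_cocone_triangle (rA ≫ f ≫ iB)
  obtain ⟨ψ, hψ⟩ := hα.exists_comp_eq B₂ hB₂ge (rA ≫ f ≫ iB ≫ β)
  obtain ⟨Z₂, g₂, h₂, hT₂⟩ := distinguished_cocone_triangle ψ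
  have sq₁ : f ≫ iB = iA ≫ rA ≫ f ≫ iB := by rw [reassoc_of% hirA]
  have sq₂ : (rA ≫ f ≫ iB) ≫ rB = rA ≫ f := by simp [hirB]
  have sq₃ : (rA ≫ f ≫ iB) ≫ β = α ≫ ψ := by simp [hψ]
  obtain ⟨γ, hγ₂, hγ₃⟩ := complete_distinguished_triangle_morphism _ _ hT' hT₂ α β sq₃
  let φ : Triangle.mk _ g' h' ⟶ Triangle.mk ψ g₂ h₂ := Triangle.homMk _ _ α β γ sq₃ hγ₂ hγ₃
  refine ⟨Z', Z₂, γ, isRetract_obj₃ hT hT' hirA hirB sq₁ sq₂, ⟨A₂, B₂, ψ, g₂, h₂, hA₂, hB₂, hT₂⟩,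
    ?_, IsHomEquivGE.hom₃ φ hT' hT₂ (hα.mono hmm') hβ⟩
  · exact t.isGE₂ _ (rot_of_distTriang _ hT₂) b ⟨t.ge_antitone hbm _ hB₂ge⟩
      ⟨t.ge_shift (b + 1) 1 b (by lia) _ hA₂ge⟩ |>.ge

end IsApproximable

variable {t}

lemma isApproximable_self {G : C} {p q : ℤ} (hGge : t.ge p G) (hGle : t.le q G) (b : ℤ) :
    IsApproximable t (addSet {G}) b (b + (q - p)) G := by
  by_cases hb : b ≤ p
  · exact ⟨G, G, 𝟙 G, .of_iso (Iso.refl G), mem_addSet_self rfl, t.ge_antitone hb G hGge,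
      IsHomEquivGE.id⟩
  · exact ⟨G, 0, 0, .of_iso (Iso.refl G), zero_mem_addSet _ (isZero_zero C),
      (t.isGE_of_isZero (isZero_zero C) b).ge,
      IsHomEquivGE.of_isZero hGle (isZero_zero C) (by lia) 0⟩

lemma isApproximable_of_mem_addSet_singleton {G : C} {p q : ℤ} (hGge : t.ge p G)
    (hGle : t.le q G) {P : C} (hP : P ∈ addSet {G}) (b : ℤ) :
    IsApproximable t (addSet {G}) b (b + (q - p)) P :=
  IsApproximable.of_mem_addSet (fun _ hX b => hX ▸ isApproximable_self hGge hGle b) hP b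

/-- Each level costs `q - p` for approximating `add G` and `1` for the shift `⟦1⟧` in the cone. -/
theorem isApproximable_of_mem_levelSet {G : C} {p q : ℤ} (hGge : t.ge p G) (hGle : t.le q G)
    (hpq : p ≤ q) : ∀ (d : ℕ) {P : C}, P ∈ levelSet G d →
      ∀ b, IsApproximable t (levelSet G d) b (b + (q - p + 1) * d - 1) P
  | 0, P, hP, b => ⟨P, P, 𝟙 P, .of_iso (Iso.refl P), hP, (t.isGE_of_isZero hP b).ge,
      IsHomEquivGE.id⟩
  | 1, P, hP, b => by
      rw [show b + (q - p + 1) * ((1 : ℕ) : ℤ) - 1 = b + (q - p) by push_cast; ring]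
      exact isApproximable_of_mem_addSet_singleton hGge hGle hP b
  | n + 2, P, hP, b => by
      rw [add_sub_assoc]
      refine IsApproximable.of_mem_addSet (T' := coneSet (levelSet G (n + 1)) (addSet {G}))
        (fun Z hZ b => ?_) hP b
      obtain ⟨A, B, f, g, h, hA, hB, hT⟩ := hZ
      have hA' := isApproximable_of_mem_levelSet hGge hGle hpq (n + 1) hA (b + 1)
      have hB' := isApproximable_of_mem_addSet_singleton hGge hGle hB
        (b + 1 + (q - p + 1) * (n + 1 : ℕ) - 1)
      have hoffset : b + 1 + (q - p + 1) * (n + 1 : ℕ) - 1 + (q - p) =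
          b + ((q - p + 1) * (n + 2 : ℕ) - 1) := by push_cast; ring
      rw [hoffset] at hB'
      refine (hA'.cone hT hB' ?_ ?_).of_subset fun _ => mem_addSet_self
      · nlinarith
      · nlinarith

variable (t) in
lemma TruncGETriangle.nonempty (a : ℤ) (A : C) : Nonempty (TruncGETriangle t a A) := by
  obtain ⟨X, Y, hX, hY, f, g, h, hT⟩ := t.exists_triangle A (a - 1) a (by lia)
  exact ⟨⟨X, Y, hX, hY, f, g, h, hT⟩⟩

lemma IsIsoInDegreesGE.nonempty_iso {m : ℤ} {P E : C} {p : P ⟶ E}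
    (hp : IsIsoInDegreesGE t m p) (hE : t.ge m E) (T : TruncGETriangle t m P) :
    Nonempty (T.right ≅ E) := by
  obtain ⟨g, hg⟩ : ∃ g : T.right ⟶ E, p = T.π ≫ g := Triangle.yoneda_exact₂ _ T.dist p
    (t.zero_of_isLE_of_isGE _ (m - 1) m (by lia) ⟨T.left_le⟩ ⟨hE⟩)
  have := hp T ⟨0, E, (t.isLE_of_isZero (isZero_zero C) _).le, hE, 0, 𝟙 E, 0,
    contractible_distinguished₁ E⟩ g (by simpa using hg.symm)
  exact ⟨asIso g⟩

lemma TruncGETriangle.isRetract_right {b m : ℤ} {P F F₂ : C} (T : TruncGETriangle t b P)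
    (hPF : IsRetract P F) {β : F ⟶ F₂} (hF₂ : t.ge b F₂) (hβ : IsHomEquivGE t m β)
    (hR : t.ge m T.right) : IsRetract T.right F₂ := by
  obtain ⟨i, r, hir⟩ := hPF
  obtain ⟨u, hu⟩ : ∃ u : T.right ⟶ F₂, i ≫ β = T.π ≫ u :=
    Triangle.yoneda_exact₂ _ T.dist (i ≫ β) (t.zero_of_isLE_of_isGE _ (b - 1) b (by lia) ⟨T.left_le⟩ ⟨hF₂⟩)
  obtain ⟨v, hv⟩ := hβ.exists_comp_eq _ hR (r ≫ T.π)
  refine ⟨u, v, ?_⟩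
  have h : T.π ≫ (u ≫ v - 𝟙 _) = 0 := by
    rw [Preadditive.comp_sub, ← reassoc_of% hu, hv, reassoc_of% hir, Category.comp_id, sub_self]
  obtain ⟨s, hs⟩ : ∃ s, u ≫ v - 𝟙 _ = T.δ ≫ s := Triangle.yoneda_exact₃ _ T.dist _ h
  have hs₀ : s = 0 := t.zero_of_isLE_of_isGE s (b - 2) b (by lia)
    ⟨t.le_shift (b - 1) 1 (b - 2) (by lia) _ T.left_le⟩ ⟨T.right_ge⟩
  rwa [hs₀, comp_zero, sub_eq_zero] at hs

end RouquierApprox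

theorem statement4_general {C : Type*} [Category C] [Preadditive C] [HasZeroObject C] [HasShift C ℤ]
    [∀ (n : ℤ), (shiftFunctor C n).Additive] [Pretriangulated C]
    (t : TStructure C) (hb : IsBoundedTStructure t)
    (G : C) (d : ℕ) :
    ∃ N : ℤ, 0 < N ∧ ∀ (a : ℤ) (E P : C) (p : P ⟶ E),
      t.ge a E → IsIsoInDegreesGE t (a - N) p → P ∈ levelSet G d →
        E ∈ levelSet G d := by
  obtain ⟨n, hn, hGle, hGge⟩ := hb G
  set N : ℤ := (2 * n + 1) * d + 1
  have hN : 0 < N := by positivity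
  refine ⟨N, hN, fun a E P p hE hp hP => ?_⟩
  obtain ⟨T⟩ := TruncGETriangle.nonempty t (a - N) P
  obtain ⟨e⟩ := hp.nonempty_iso (t.ge_antitone (by lia) E hE) T
  obtain ⟨F, F₂, β, hPF, hF₂, hF₂ge, hβ⟩ :=
    isApproximable_of_mem_levelSet hGge hGle (by lia) d hP (a - N)
  have hR := T.isRetract_right hPF hF₂ge hβ
    (t.ge_antitone (by linarith) _ ((t.ge a).prop_of_iso e.symm hE))
  exact levelSet_of_isRetract ((IsRetract.of_iso e.symm).trans hR) hF₂

/-- Proposition 3.5. Let `T` be a triangulated category with a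
bounded t-structure, `G` an object and `d > 0`. There exists `N > 0` such that:
if `E ∈ T^{≥ a}` for some integer `a`, `p : P ⟶ E` is an isomorphism in degrees
`≥ a - N`, and `P ∈ ⟨G⟩_d`, then `E ∈ ⟨G⟩_d`. -/
theorem statement4 {C : Type*} [Category C] [Preadditive C] [HasZeroObject C] [HasShift C ℤ]
    [∀ (n : ℤ), (shiftFunctor C n).Additive] [Pretriangulated C]
    (t : TStructure C) (hb : IsBoundedTStructure t)
    (G : C) (d : ℕ) (hd : 0 < d) :
    ∃ N : ℤ, 0 < N ∧ ∀ (a : ℤ) (E P : C) (p : P ⟶ E),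
      t.ge a E → IsIsoInDegreesGE t (a - N) p → P ∈ levelSet G d →
        E ∈ levelSet G d :=
  statement4_general t hb G d
end
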